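/- arXiv:2402.15324 — 4 statements merged into one kernel-verified Lean document; each statement's English description precedes it below -/
import Mathlib

section
/- Let N be a finite set with |N| = n ≥ 1, let v : 2^N → ℝ, and let i ∈ N. Then (1/n!)·∑_σ (v(C_i^σ ∪ {i}) − v(C_i^σ)) = ∑_{C ⊆ N\{i}} (|C|!·(n − |C| − 1)!/n!)·(v(C ∪ {i}) − v(C)), where the sum on the left ranges over all n! linear orderings σ of N; i.e., the permutation-average of marginal contributions equals the coalition-weighted sum defining the Shapley value. -/
/-!
Group the orderings `σ` by the predecessor coalition `C` of `i`. Since `|C^σ_i| = σ(i)`, the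
orderings with `C^σ_i = C` are exactly the bijections `N ≃ {0, …, n-1}` sending `C` onto
`{0, …, |C|-1}`, `i` to `|C|` and the rest onto `{|C|+1, …, n-1}`; there are
`|C|! · 1! · (n-|C|-1)!` of them, one bijection per block.
-/

open Finset

namespace Equiv

variable {α β γ : Type*}

def fiberwiseEquivPi (f : α → γ) (g : β → γ) :
    {σ : α ≃ β // ∀ a, g (σ a) = f a} ≃ ∀ c, {a // f a = c} ≃ {b // g b = c} where
  toFun σ c := σ.1.subtypeEquiv fun a => by rw [σ.2 a]
  invFun e := ⟨ofFiberEquiv e, ofFiberEquiv_map e⟩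
  left_inv σ := by ext a; simp [ofFiberEquiv]
  right_inv e := by
    ext c ⟨a, rfl⟩
    rfl

end Equiv

theorem Fintype.card_equiv_fiberwise {α β γ : Type*} [Fintype α] [Fintype β] [Fintype γ]
    [DecidableEq α] [DecidableEq β] [DecidableEq γ] (f : α → γ) (g : β → γ)
    (h : ∀ c, card {a // f a = c} = card {b // g b = c}) :
    card {σ : α ≃ β // ∀ a, g (σ a) = f a} = ∏ c, (card {a // f a = c}).factorial := by
  rw [card_congr (Equiv.fiberwiseEquivPi f g), card_pi]
  exact Finset.prod_congr rfl fun c _ => card_equiv (equivOfCardEq (h c))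

theorem Fintype.card_compare_eq {n : ℕ} (c : Fin n) (o : Ordering) :
    card {k : Fin n // compare k c = o} = Ordering.rec c 1 (n - c - 1) o := by
  cases o
  · simp only [compare_lt_iff_lt]
    rw [card_subtype, ← Fin.card_Iio]
    congr 1; ext; simp
  · simp
  · simp only [compare_gt_iff_gt]
    rw [card_subtype, show n - c - 1 = n - 1 - c by omega, ← Fin.card_Ioi]
    congr 1; ext; simp

section Shapley

variable {α : Type*} [Fintype α] [DecidableEq α] {n : ℕ}

def predecessors (σ : α ≃ Fin n) (i : α) : Finset α := {j | σ j < σ i}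

omit [DecidableEq α] in
theorem card_predecessors (σ : α ≃ Fin n) (i : α) : #(predecessors σ i) = σ i := by
  rw [← Fin.card_Iio, predecessors]
  exact card_equiv σ (by simp)

omit [DecidableEq α] in
theorem self_notMem_predecessors (σ : α ≃ Fin n) (i : α) : i ∉ predecessors σ i := by
  simp [predecessors]

/-- The block of `j` in an ordering whose predecessor coalition of `i` is `C`. -/
def relativePosition (i : α) (C : Finset α) (j : α) : Ordering :=
  if j ∈ C then .lt else if j = i then .eq else .gt

theorem predecessors_eq_iff {σ : α ≃ Fin n} {i : α} {C : Finset α} (hi : i ∉ C) :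
    predecessors σ i = C ↔ ∀ j, compare (σ j) (σ i) = relativePosition i C j := by
  constructor
  · rintro rfl j
    unfold relativePosition predecessors
    split_ifs with hj hji
    · simpa [compare_lt_iff_lt] using hj
    · simp [hji]
    · simp only [mem_filter, mem_univ, true_and, not_lt] at hj
      exact compare_gt_iff_gt.2 (hj.lt_of_ne fun h => hji (σ.injective h.symm))
  · intro h
    ext j
    simp only [predecessors, mem_filter, mem_univ, true_and, ← compare_lt_iff_lt, h j,
      relativePosition]
    split_ifs <;> simp_all

theorem predecessors_eq_iff_compare {σ : α ≃ Fin n} {i : α} {C : Finset α} (hi : i ∉ C)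
    {c : Fin n} (hc : (c : ℕ) = #C) :
    predecessors σ i = C ↔ ∀ j, compare (σ j) c = relativePosition i C j := by
  constructor
  · intro h
    have hσi : σ i = c := Fin.ext (by rw [← card_predecessors, h, hc])
    rw [← hσi]
    exact (predecessors_eq_iff hi).1 h
  · intro h
    have hσi : σ i = c := by simpa [relativePosition, hi] using h i
    rw [predecessors_eq_iff hi, hσi]
    exact h

theorem card_relativePosition_eq (i : α) {C : Finset α} (hi : i ∉ C) (o : Ordering) :
    Fintype.card {j // relativePosition i C j = o}
      = Ordering.rec #C 1 (Fintype.card α - #C - 1) o := by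
  have fiber (p : α → Prop) [DecidablePred p] (h : ∀ j, relativePosition i C j = o ↔ p j) :
      Fintype.card {j // relativePosition i C j = o} = Fintype.card {j // p j} :=
    Fintype.card_congr (Equiv.subtypeEquivRight h)
  cases o
  · rw [fiber (· ∈ C) fun j => by unfold relativePosition; grind]
    simp
  · rw [fiber (· = i) fun j => by unfold relativePosition; grind]
    simp
  · rw [fiber (fun j => j ∉ C ∧ j ≠ i) fun j => by unfold relativePosition; grind,
      Fintype.card_subtype, Nat.sub_sub, ← card_insert_of_notMem hi, ← card_compl]
    congr 1; ext; simp [and_comm]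

theorem card_predecessors_eq {i : α} {C : Finset α} (hi : i ∉ C) :
    #{σ : α ≃ Fin (Fintype.card α) | predecessors σ i = C}
      = (#C).factorial * (Fintype.card α - #C - 1).factorial := by
  have hC : #C < Fintype.card α := by
    simpa [card_insert_of_notMem hi] using card_le_univ (insert i C)
  let c : Fin (Fintype.card α) := ⟨#C, hC⟩
  calc #{σ : α ≃ Fin (Fintype.card α) | predecessors σ i = C}
      = Fintype.card {σ : α ≃ Fin (Fintype.card α) //
          ∀ j, compare (σ j) c = relativePosition i C j} := by
        rw [Fintype.card_subtype]
        simp only [predecessors_eq_iff_compare hi (c := c) rfl]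
    _ = ∏ o, (Fintype.card {j // relativePosition i C j = o}).factorial :=
        Fintype.card_equiv_fiberwise (relativePosition i C) (compare · c) fun o => by
          rw [card_relativePosition_eq i hi, Fintype.card_compare_eq]
    _ = (#C).factorial * (Fintype.card α - #C - 1).factorial := by
        rw [show (univ : Finset Ordering) = {.lt, .eq, .gt} from rfl]
        simp [card_relativePosition_eq i hi]

end Shapley

/-- the permutation-average of marginal contributions equals the
coalition-weighted sum defining the Shapley value. -/
theorem stmt_1 {α : Type*} [Fintype α] [DecidableEq α]
    (v : Finset α → ℝ) (i : α) :
    (1 / ((Fintype.card α).factorial : ℝ)) *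
        ∑ σ : α ≃ Fin (Fintype.card α),
          (v (insert i (Finset.univ.filter fun j => σ j < σ i)) -
            v (Finset.univ.filter fun j => σ j < σ i))
      = ∑ C ∈ (Finset.univ.erase i).powerset,
          ((C.card.factorial : ℝ) * ((Fintype.card α - C.card - 1).factorial : ℝ) /
              ((Fintype.card α).factorial : ℝ)) *
            (v (insert i C) - v C) := by
  change (1 / _) * ∑ σ : α ≃ Fin (Fintype.card α),
    (v (insert i (predecessors σ i)) - v (predecessors σ i)) = _
  have hmaps (σ : α ≃ Fin (Fintype.card α)) (_ : σ ∈ univ) :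
      predecessors σ i ∈ (univ.erase i).powerset :=
    mem_powerset.2 fun j hj => mem_erase.2
      ⟨fun h => self_notMem_predecessors σ i (h ▸ hj), mem_univ j⟩
  rw [← sum_fiberwise_of_maps_to hmaps, mul_sum]
  refine sum_congr rfl fun C hC => ?_
  have hi : i ∉ C := fun h => (mem_erase.1 (mem_powerset.1 hC h)).1 rfl
  rw [sum_congr rfl fun σ hσ => by rw [(mem_filter.1 hσ).2], sum_const,
    card_predecessors_eq hi, nsmul_eq_mul]
  push_cast
  ring
end

section
/- Let v : 2^N → ℝ be supermodular on the subsets of a finite set N with v(∅) = 0, and let σ be a linear ordering of N with predecessor coalitions C_i^σ. Then the marginal contribution vector x given by x_i = v(C_i^σ ∪ {i}) − v(C_i^σ) lies in the core: for every coalition C ⊆ N, ∑_{i∈C} x_i ≥ v(C). -/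
/-!
Supermodularity says that marginal contributions increase along `⊆`. Adding the players of a
coalition `C` one at a time in the order `σ`, each new player `i` joins a subset of its
predecessor coalition `C_i^σ`, so what it adds to `v` is at most `x_i`; these increments
telescope to `v C - v ∅`.
-/

section

open Finset

variable {α M : Type*} [DecidableEq α] [AddCommGroup M] [PartialOrder M] [IsOrderedAddMonoid M]

theorem marginal_le_marginal_of_subset {v : Finset α → M}
    (hsm : ∀ C D : Finset α, v C + v D ≤ v (C ∪ D) + v (C ∩ D))
    {A B : Finset α} {i : α} (hAB : A ⊆ B) (hiB : i ∉ B) :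
    v (insert i A) - v A ≤ v (insert i B) - v B := by
  have hunion : insert i A ∪ B = insert i B := by
    rw [insert_union, union_eq_right.mpr hAB]
  have hinter : insert i A ∩ B = A := by
    rw [insert_inter_of_notMem hiB, inter_eq_left.mpr hAB]
  have hsup := hsm (insert i A) B
  rw [hunion, hinter] at hsup
  rw [sub_le_sub_iff]
  simpa only [add_comm] using hsup

theorem le_sum_marginal_of_injective [Fintype α] {β : Type*} [LinearOrder β]
    {v : Finset α → M} (hsm : ∀ C D : Finset α, v C + v D ≤ v (C ∪ D) + v (C ∩ D))
    (h0 : v ∅ = 0) {σ : α → β} (hσ : Function.Injective σ) (C : Finset α) :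
    v C ≤ ∑ i ∈ C,
        (v (insert i (univ.filter fun j => σ j < σ i)) - v (univ.filter fun j => σ j < σ i)) := by
  induction C using Finset.induction_on_max_value σ with
  | empty => simp [h0]
  | insert i C hiC hmax ih =>
    have hC_pred : C ⊆ univ.filter fun j => σ j < σ i := fun j hj =>
      (mem_filter_univ j).mpr <| (hmax j hj).lt_of_ne fun h => hiC (hσ h ▸ hj)
    have hi_pred : i ∉ univ.filter fun j => σ j < σ i := by simp
    have hstep := marginal_le_marginal_of_subset hsm hC_pred hi_pred
    rw [sum_insert hiC]
    calc v (insert i C) = (v (insert i C) - v C) + v C := (sub_add_cancel _ _).symm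
      _ ≤ _ := add_le_add hstep ih

end

/-- for a supermodular `v` with `v(∅) = 0` and a linear ordering `σ`,
the marginal contribution vector `x_i = v(C_i^σ ∪ {i}) − v(C_i^σ)` lies in the core:
`∑_{i∈C} x_i ≥ v(C)` for every coalition `C ⊆ N`. -/
theorem stmt_10 {α : Type*} [Fintype α] [DecidableEq α]
    (v : Finset α → ℝ)
    (hsm : ∀ C D : Finset α, v C + v D ≤ v (C ∪ D) + v (C ∩ D))
    (h0 : v ∅ = 0)
    (σ : α ≃ Fin (Fintype.card α)) (C : Finset α) :
    v C ≤ ∑ i ∈ C,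
        (v (insert i (Finset.univ.filter fun j => σ j < σ i)) -
          v (Finset.univ.filter fun j => σ j < σ i)) :=
  le_sum_marginal_of_injective hsm h0 σ.injective C
end

section
/- With the Shapley–Bellman setup below, the Shapley–Bellman operator contracts: for all families Q = (Q_i) and Q' = (Q'_i) of per-agent Q-functions, ‖ΥQ − ΥQ'‖ ≤ γ·(max_{s∈S} ∑_{i∈N} max_{a_i∈A_i} w_i(s,a_i))·‖Q − Q'‖. In particular, if max_{s∈S} ∑_{i∈N} max_{a_i∈A_i} w_i(s,a_i) < 1/γ, then Υ decreases distances by a factor δ = γ·max_{s∈S} ∑_{i∈N} max_{a_i∈A_i} w_i(s,a_i) with 0 < δ < 1, i.e., it is a contraction mapping with respect to these norms. -/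
/-!
Only the discounted continuation value `V_Q(s') = ∑_j max_{a_j} Q_j(s', a_j)` depends on `Q`.
A maximum over a finite set is 1-Lipschitz for the sup distance, so
`|V_Q(s') - V_{Q'}(s')| ≤ ‖Q - Q'‖`; averaging over `P(·|s,a)` keeps this bound, the
discount contributes `γ`, and agent `i` scales it by `w_i(s,a_i)`. Summing over the agents
gives the factor `∑_i w_i(s,a_i) ≤ max_s ∑_i max_{a_i} w_i(s,a_i)`.
-/

open Finset

theorem iSup_le_iSup_add_iSup_abs_sub {α : Type*} [Finite α] [Nonempty α] (f g : α → ℝ) :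
    ⨆ a, f a ≤ (⨆ a, g a) + ⨆ a, |f a - g a| :=
  ciSup_le fun a => calc
    f a ≤ g a + |f a - g a| := by linarith [le_abs_self (f a - g a)]
    _ ≤ (⨆ a, g a) + ⨆ a, |f a - g a| :=
      add_le_add (le_ciSup (Finite.bddAbove_range g) a)
        (le_ciSup (Finite.bddAbove_range fun a => |f a - g a|) a)

theorem abs_iSup_sub_iSup_le {α : Type*} [Finite α] [Nonempty α] (f g : α → ℝ) :
    |(⨆ a, f a) - ⨆ a, g a| ≤ ⨆ a, |f a - g a| := by
  have hfg := iSup_le_iSup_add_iSup_abs_sub f g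
  have hgf := iSup_le_iSup_add_iSup_abs_sub g f
  rw [iSup_congr fun a => abs_sub_comm (g a) (f a)] at hgf
  exact abs_sub_le_iff.2 ⟨by linarith, by linarith⟩

theorem sum_iSup_le_iSup_sum {ι : Type*} [Fintype ι] {A : ι → Type*} [∀ j, Finite (A j)]
    [∀ j, Nonempty (A j)] (f : ∀ j, A j → ℝ) :
    ∑ j, ⨆ a, f j a ≤ ⨆ a : (∀ j, A j), ∑ j, f j (a j) := by
  choose a ha using fun j => Finite.exists_max (f j)
  calc ∑ j, ⨆ a, f j a ≤ ∑ j, f j (a j) := sum_le_sum fun j _ => ciSup_le (ha j)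
    _ ≤ _ := le_ciSup (Finite.bddAbove_range fun a : (∀ j, A j) => ∑ j, f j (a j)) a

theorem abs_sum_iSup_sub_sum_iSup_le {ι : Type*} [Fintype ι] {A : ι → Type*}
    [∀ j, Finite (A j)] [∀ j, Nonempty (A j)] (f g : ∀ j, A j → ℝ) :
    |(∑ j, ⨆ a, f j a) - ∑ j, ⨆ a, g j a| ≤ ⨆ a : (∀ j, A j), ∑ j, |f j (a j) - g j (a j)| :=
  calc |(∑ j, ⨆ a, f j a) - ∑ j, ⨆ a, g j a|
      ≤ ∑ j, |(⨆ a, f j a) - ⨆ a, g j a| := by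
        rw [← sum_sub_distrib]; exact abs_sum_le_sum_abs _ _
    _ ≤ ∑ j, ⨆ a, |f j a - g j a| := sum_le_sum fun j _ => abs_iSup_sub_iSup_le _ _
    _ ≤ _ := sum_iSup_le_iSup_sum fun j a => |f j a - g j a|

theorem abs_sum_mul_sub_sum_mul_le {S : Type*} [Fintype S] {p u v : S → ℝ}
    (hp0 : ∀ s, 0 ≤ p s) (hp1 : ∑ s, p s = 1) {M : ℝ} (huv : ∀ s, |u s - v s| ≤ M) :
    |∑ s, p s * u s - ∑ s, p s * v s| ≤ M :=
  calc |∑ s, p s * u s - ∑ s, p s * v s|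
      ≤ ∑ s, |p s * u s - p s * v s| := by
        rw [← sum_sub_distrib]; exact abs_sum_le_sum_abs _ _
    _ = ∑ s, p s * |u s - v s| := by
        simp only [← mul_sub, abs_mul, abs_of_nonneg (hp0 _)]
    _ ≤ ∑ s, p s * M := sum_le_sum fun s _ => mul_le_mul_of_nonneg_left (huv s) (hp0 s)
    _ = M := by rw [← sum_mul, hp1, one_mul]

noncomputable section

variable {S : Type*} {ι : Type*} [Fintype ι] {A : ι → Type*}

/-- `shapleyBellman P R w b γ Q i s a = (ΥQ)_i(s,a)`. -/
def shapleyBellman [Fintype S] (P : S → (∀ i, A i) → S → ℝ) (R : S → (∀ i, A i) → ℝ)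
    (w : ∀ i, S → A i → ℝ) (b : ι → S → ℝ) (γ : ℝ) (Q : ∀ i, S → A i → ℝ)
    (i : ι) (s : S) (a : ∀ i, A i) : ℝ :=
  w i s (a i) * ∑ s', P s a s' * (R s a + γ * ∑ j, ⨆ aj, Q j s' aj) - b i s

def qDist (Q Q' : ∀ i, S → A i → ℝ) : ℝ :=
  ⨆ p : S × (∀ i, A i), ∑ i, |Q i p.1 (p.2 i) - Q' i p.1 (p.2 i)|

theorem qDist_nonneg (Q Q' : ∀ i, S → A i → ℝ) : 0 ≤ qDist Q Q' :=
  Real.iSup_nonneg fun _ => sum_nonneg fun _ _ => abs_nonneg _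

theorem sum_abs_sub_le_qDist [Finite S] [∀ i, Finite (A i)] (Q Q' : ∀ i, S → A i → ℝ) (s : S)
    (a : ∀ i, A i) :
    ∑ i, |Q i s (a i) - Q' i s (a i)| ≤ qDist Q Q' :=
  le_ciSup (f := fun p : S × (∀ i, A i) => ∑ i, |Q i p.1 (p.2 i) - Q' i p.1 (p.2 i)|)
    (Finite.bddAbove_range _) (s, a)

theorem abs_sum_iSup_sub_sum_iSup_le_qDist [Finite S] [∀ i, Finite (A i)] [∀ i, Nonempty (A i)]
    (Q Q' : ∀ i, S → A i → ℝ) (s : S) :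
    |(∑ j, ⨆ aj, Q j s aj) - ∑ j, ⨆ aj, Q' j s aj| ≤ qDist Q Q' :=
  (abs_sum_iSup_sub_sum_iSup_le _ _).trans <|
    ciSup_le fun a => sum_abs_sub_le_qDist Q Q' s a

variable [Fintype S] [∀ i, Finite (A i)] [∀ i, Nonempty (A i)]
  {P : S → (∀ i, A i) → S → ℝ} {R : S → (∀ i, A i) → ℝ} {w : ∀ i, S → A i → ℝ}
  {b : ι → S → ℝ} {γ : ℝ}

theorem abs_shapleyBellman_sub_le (hP0 : ∀ s a s', 0 ≤ P s a s')
    (hP1 : ∀ s a, ∑ s', P s a s' = 1) (hw : ∀ i s ai, 0 ≤ w i s ai) (hγ : 0 ≤ γ)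
    (Q Q' : ∀ i, S → A i → ℝ) (i : ι) (s : S) (a : ∀ i, A i) :
    |shapleyBellman P R w b γ Q i s a - shapleyBellman P R w b γ Q' i s a|
      ≤ w i s (a i) * (γ * qDist Q Q') := by
  have hexp := abs_sum_mul_sub_sum_mul_le (hP0 s a) (hP1 s a)
    (u := fun s' => R s a + γ * ∑ j, ⨆ aj, Q j s' aj)
    (v := fun s' => R s a + γ * ∑ j, ⨆ aj, Q' j s' aj) fun s' => by
      rw [add_sub_add_left_eq_sub, ← mul_sub, abs_mul, abs_of_nonneg hγ]
      exact mul_le_mul_of_nonneg_left (abs_sum_iSup_sub_sum_iSup_le_qDist Q Q' s') hγ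
  rw [shapleyBellman, shapleyBellman, sub_sub_sub_cancel_right, ← mul_sub, abs_mul,
    abs_of_nonneg (hw i s (a i))]
  exact mul_le_mul_of_nonneg_left hexp (hw i s (a i))

theorem sum_abs_shapleyBellman_sub_le (hP0 : ∀ s a s', 0 ≤ P s a s')
    (hP1 : ∀ s a, ∑ s', P s a s' = 1) (hw : ∀ i s ai, 0 ≤ w i s ai) (hγ : 0 ≤ γ)
    (Q Q' : ∀ i, S → A i → ℝ) (s : S) (a : ∀ i, A i) :
    ∑ i, |shapleyBellman P R w b γ Q i s a - shapleyBellman P R w b γ Q' i s a|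
      ≤ γ * (⨆ s, ∑ i, ⨆ ai, w i s ai) * qDist Q Q' := by
  have hw_le : ∑ i, w i s (a i) ≤ ⨆ s, ∑ i, ⨆ ai, w i s ai :=
    (sum_le_sum fun i _ => le_ciSup (Finite.bddAbove_range _) (a i)).trans
      (le_ciSup (f := fun s => ∑ i, ⨆ ai, w i s ai) (Finite.bddAbove_range _) s)
  calc ∑ i, |shapleyBellman P R w b γ Q i s a - shapleyBellman P R w b γ Q' i s a|
      ≤ ∑ i, w i s (a i) * (γ * qDist Q Q') :=
        sum_le_sum fun i _ => abs_shapleyBellman_sub_le hP0 hP1 hw hγ Q Q' i s a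
    _ = (∑ i, w i s (a i)) * (γ * qDist Q Q') := (sum_mul _ _ _).symm
    _ ≤ (⨆ s, ∑ i, ⨆ ai, w i s ai) * (γ * qDist Q Q') :=
        mul_le_mul_of_nonneg_right hw_le (mul_nonneg hγ (qDist_nonneg Q Q'))
    _ = γ * (⨆ s, ∑ i, ⨆ ai, w i s ai) * qDist Q Q' := by ring

end

theorem stmt_14_general
    {S : Type*} [Fintype S]
    {ι : Type*} [Fintype ι]
    {A : ι → Type*} [∀ i, Fintype (A i)] [∀ i, Nonempty (A i)]
    (P : S → (∀ i, A i) → S → ℝ)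
    (hP0 : ∀ s a s', 0 ≤ P s a s')
    (hP1 : ∀ s a, ∑ s' : S, P s a s' = 1)
    (R : S → (∀ i, A i) → ℝ)
    (w : ∀ i, S → A i → ℝ) (hw : ∀ i s ai, 0 < w i s ai)
    (b : ι → S → ℝ)
    (γ : ℝ) (hγ : 0 < γ ∧ γ < 1)
    (Q Q' : ∀ i, S → A i → ℝ) :
    (⨆ p : S × (∀ i, A i), ∑ i : ι,
        |(w i p.1 (p.2 i) *
            ∑ s' : S, P p.1 p.2 s' *
              (R p.1 p.2 + γ * ∑ j : ι, ⨆ aj : A j, Q j s' aj) - b i p.1) -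
          (w i p.1 (p.2 i) *
            ∑ s' : S, P p.1 p.2 s' *
              (R p.1 p.2 + γ * ∑ j : ι, ⨆ aj : A j, Q' j s' aj) - b i p.1)|)
      ≤ γ * (⨆ s : S, ∑ i : ι, ⨆ ai : A i, w i s ai) *
          (⨆ p : S × (∀ i, A i), ∑ i : ι, |Q i p.1 (p.2 i) - Q' i p.1 (p.2 i)|) := by
  have hw0 : ∀ i s ai, 0 ≤ w i s ai := fun i s ai => (hw i s ai).le
  have hW : 0 ≤ ⨆ s, ∑ i, ⨆ ai, w i s ai :=
    Real.iSup_nonneg fun s => sum_nonneg fun i _ => Real.iSup_nonneg fun ai => hw0 i s ai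
  exact Real.iSup_le
    (fun p => sum_abs_shapleyBellman_sub_le hP0 hP1 hw0 hγ.1.le Q Q' p.1 p.2)
    (mul_nonneg (mul_nonneg hγ.1.le hW) (qDist_nonneg Q Q'))

/-- the Shapley–Bellman operator contracts:
`‖ΥQ − ΥQ'‖ ≤ γ·(max_s ∑_i max_{a_i} w_i(s,a_i))·‖Q − Q'‖`, where
`(ΥQ)_i(s,a) = w_i(s,a_i)·∑_{s'} P(s'|s,a)·(R(s,a) + γ·∑_j max_{a_j'} Q_j(s',a_j')) − b_i(s)`
and `‖Q − Q'‖ = max_{s,a} ∑_i |Q_i(s,a_i) − Q'_i(s,a_i)|`. -/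
theorem stmt_14
    {S : Type*} [Fintype S] [Nonempty S]
    {ι : Type*} [Fintype ι] [DecidableEq ι]
    {A : ι → Type*} [∀ i, Fintype (A i)] [∀ i, Nonempty (A i)]
    (P : S → (∀ i, A i) → S → ℝ)
    (hP0 : ∀ s a s', 0 ≤ P s a s')
    (hP1 : ∀ s a, ∑ s' : S, P s a s' = 1)
    (R : S → (∀ i, A i) → ℝ)
    (w : ∀ i, S → A i → ℝ) (hw : ∀ i s ai, 0 < w i s ai)
    (b : ι → S → ℝ)
    (γ : ℝ) (hγ : 0 < γ ∧ γ < 1)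
    (Q Q' : ∀ i, S → A i → ℝ) :
    (⨆ p : S × (∀ i, A i), ∑ i : ι,
        |(w i p.1 (p.2 i) *
            ∑ s' : S, P p.1 p.2 s' *
              (R p.1 p.2 + γ * ∑ j : ι, ⨆ aj : A j, Q j s' aj) - b i p.1) -
          (w i p.1 (p.2 i) *
            ∑ s' : S, P p.1 p.2 s' *
              (R p.1 p.2 + γ * ∑ j : ι, ⨆ aj : A j, Q' j s' aj) - b i p.1)|)
      ≤ γ * (⨆ s : S, ∑ i : ι, ⨆ ai : A i, w i s ai) *
          (⨆ p : S × (∀ i, A i), ∑ i : ι, |Q i p.1 (p.2 i) - Q' i p.1 (p.2 i)|) :=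
  stmt_14_general P hP0 hP1 R w hw b γ hγ Q Q'
end

section
/- With the Shapley–Bellman setup below, assume max_{s∈S} ∑_{i∈N} max_{a_i∈A_i} w_i(s,a_i) < 1/γ. Then there is at most one family Q = (Q_i : S × A_i → ℝ)_{i∈N} satisfying the Shapley–Bellman optimality equation: Q_i(s, a_i) = w_i(s,a_i)·∑_{s'∈S} P(s'|s,a)·(R(s,a) + γ·∑_{j∈N} max_{a_j'∈A_j} Q_j(s',a_j')) − b_i(s) for every i ∈ N, every s ∈ S and every joint action a ∈ A; that is, if Q and Q' both satisfy this equation then Q_i(s,a_i) = Q'_i(s,a_i) for all i, s, a_i. -/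
/-!
Write `V_Q(s) = ∑ⱼ maxₐ Qⱼ(s, a)` and `D = ‖V_Q - V_Q'‖∞`. Subtracting the two optimality
equations, the rewards and the offsets `bᵢ` cancel and averaging over `P(·|s,a)` does not increase
the sup norm, so `|Qᵢ(s,aᵢ) - Q'ᵢ(s,aᵢ)| ≤ wᵢ(s,aᵢ) γ D`. Summing the maxima over the agents gives
`D ≤ (maxₛ ∑ᵢ maxₐ wᵢ(s,a)) γ D`, and the factor in front of `D` is `< 1`, so `D = 0`.
-/

open Finset

theorem ciSup_le_ciSup_add {α : Type*} [Finite α] [Nonempty α] {f g : α → ℝ} {c : ℝ}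
    (h : ∀ a, f a ≤ g a + c) : ⨆ a, f a ≤ (⨆ a, g a) + c :=
  ciSup_le fun a => (h a).trans <|
    add_le_add_left (le_ciSup (Set.finite_range g).bddAbove a) c

theorem abs_ciSup_sub_ciSup_le {α : Type*} [Finite α] [Nonempty α] {f g : α → ℝ} {c : ℝ}
    (h : ∀ a, |f a - g a| ≤ c) : |(⨆ a, f a) - ⨆ a, g a| ≤ c := by
  rw [abs_sub_le_iff, sub_le_iff_le_add', sub_le_iff_le_add']
  exact ⟨ciSup_le_ciSup_add fun a => by linarith [(abs_sub_le_iff.mp (h a)).1],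
    ciSup_le_ciSup_add fun a => by linarith [(abs_sub_le_iff.mp (h a)).2]⟩

theorem abs_sum_mul_le_norm_of_sum_eq_one {σ : Type*} [Fintype σ] {p x : σ → ℝ}
    (hp0 : ∀ s, 0 ≤ p s) (hp1 : ∑ s, p s = 1) : |∑ s, p s * x s| ≤ ‖x‖ :=
  calc |∑ s, p s * x s|
      ≤ ∑ s, |p s * x s| := abs_sum_le_sum_abs _ _
    _ = ∑ s, p s * ‖x s‖ := by simp only [abs_mul, abs_of_nonneg (hp0 _), Real.norm_eq_abs]
    _ ≤ ∑ s, p s * ‖x‖ :=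
        sum_le_sum fun s _ => mul_le_mul_of_nonneg_left (norm_le_pi_norm x s) (hp0 s)
    _ = ‖x‖ := by rw [← sum_mul, hp1, one_mul]

noncomputable section

namespace ShapleyBellman

variable {S ι : Type*} [Fintype S] [Fintype ι] {A : ι → Type*}

def value (Q : ∀ i, S → A i → ℝ) (s : S) : ℝ := ∑ j, ⨆ aj, Q j s aj

def operator (P : S → (∀ i, A i) → S → ℝ) (R : S → (∀ i, A i) → ℝ) (w : ∀ i, S → A i → ℝ)
    (b : ι → S → ℝ) (γ : ℝ) (Q : ∀ i, S → A i → ℝ) (i : ι) (s : S) (a : ∀ j, A j) : ℝ :=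
  w i s (a i) * ∑ s', P s a s' * (R s a + γ * value Q s') - b i s

theorem operator_sub (P : S → (∀ i, A i) → S → ℝ) (R : S → (∀ i, A i) → ℝ)
    (w : ∀ i, S → A i → ℝ) (b : ι → S → ℝ) (γ : ℝ) (Q Q' : ∀ i, S → A i → ℝ) (i : ι) (s : S)
    (a : ∀ j, A j) :
    operator P R w b γ Q i s a - operator P R w b γ Q' i s a =
      w i s (a i) * (γ * ∑ s', P s a s' * (value Q - value Q') s') := by
  simp only [operator, Pi.sub_apply, mul_sum]
  rw [sub_sub_sub_cancel_right, ← sum_sub_distrib]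
  exact sum_congr rfl fun s' _ => by ring

theorem abs_operator_sub_le {P : S → (∀ i, A i) → S → ℝ} (hP0 : ∀ s a s', 0 ≤ P s a s')
    (hP1 : ∀ s a, ∑ s', P s a s' = 1) (R : S → (∀ i, A i) → ℝ) {w : ∀ i, S → A i → ℝ}
    (b : ι → S → ℝ) {γ : ℝ} (hγ : 0 ≤ γ) (Q Q' : ∀ i, S → A i → ℝ) (i : ι) (s : S)
    (a : ∀ j, A j) (hw : 0 ≤ w i s (a i)) :
    |operator P R w b γ Q i s a - operator P R w b γ Q' i s a| ≤
      w i s (a i) * (γ * ‖value Q - value Q'‖) := by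
  rw [operator_sub, abs_mul, abs_mul, abs_of_nonneg hw, abs_of_nonneg hγ]
  gcongr
  exact abs_sum_mul_le_norm_of_sum_eq_one (hP0 s a) (hP1 s a)

omit [Fintype S] in
theorem abs_value_sub_le [∀ i, Fintype (A i)] [∀ i, Nonempty (A i)] {w Q Q' : ∀ i, S → A i → ℝ}
    {c : ℝ} (hc : 0 ≤ c) (h : ∀ i s ai, |Q i s ai - Q' i s ai| ≤ w i s ai * c) (s : S) :
    |value Q s - value Q' s| ≤ (∑ i, ⨆ ai, w i s ai) * c :=
  calc |value Q s - value Q' s|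
      = |∑ i, ((⨆ ai, Q i s ai) - ⨆ ai, Q' i s ai)| := by rw [value, value, sum_sub_distrib]
    _ ≤ ∑ i, |(⨆ ai, Q i s ai) - ⨆ ai, Q' i s ai| := abs_sum_le_sum_abs _ _
    _ ≤ ∑ i, (⨆ ai, w i s ai) * c := sum_le_sum fun i _ => abs_ciSup_sub_ciSup_le fun ai =>
        (h i s ai).trans <| mul_le_mul_of_nonneg_right
          (le_ciSup (Set.finite_range (w i s)).bddAbove ai) hc
    _ = (∑ i, ⨆ ai, w i s ai) * c := (sum_mul ..).symm

end ShapleyBellman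

end

open ShapleyBellman in
theorem stmt_15_general
    {S : Type*} [Fintype S]
    {ι : Type*} [Fintype ι]
    {A : ι → Type*} [∀ i, Fintype (A i)] [∀ i, Nonempty (A i)]
    (P : S → (∀ i, A i) → S → ℝ)
    (hP0 : ∀ s a s', 0 ≤ P s a s')
    (hP1 : ∀ s a, ∑ s' : S, P s a s' = 1)
    (R : S → (∀ i, A i) → ℝ)
    (w : ∀ i, S → A i → ℝ) (hw : ∀ i s ai, 0 < w i s ai)
    (b : ι → S → ℝ)
    (γ : ℝ) (hγ : 0 < γ ∧ γ < 1)
    (hcond : (⨆ s : S, ∑ i : ι, ⨆ ai : A i, w i s ai) < 1 / γ)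
    (Q Q' : ∀ i, S → A i → ℝ)
    (hQ : ∀ (i : ι) (s : S) (a : ∀ j, A j),
      Q i s (a i) =
        w i s (a i) *
          ∑ s' : S, P s a s' *
            (R s a + γ * ∑ j : ι, ⨆ aj : A j, Q j s' aj) - b i s)
    (hQ' : ∀ (i : ι) (s : S) (a : ∀ j, A j),
      Q' i s (a i) =
        w i s (a i) *
          ∑ s' : S, P s a s' *
            (R s a + γ * ∑ j : ι, ⨆ aj : A j, Q' j s' aj) - b i s) :
    ∀ (i : ι) (s : S) (ai : A i), Q i s ai = Q' i s ai := by
  intro i s ai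
  have : Nonempty S := ⟨s⟩
  set D := ‖value Q - value Q'‖
  have hγD : 0 ≤ γ * D := mul_nonneg hγ.1.le (norm_nonneg _)
  have hQ_sub : ∀ i s ai, |Q i s ai - Q' i s ai| ≤ w i s ai * (γ * D) := by
    intro i s ai
    obtain ⟨a, rfl⟩ := Function.surjective_eval i ai
    rw [hQ, hQ']
    exact abs_operator_sub_le hP0 hP1 R b hγ.1.le Q Q' i s a (hw i s (a i)).le
  have hD : D ≤ (⨆ s, ∑ i, ⨆ ai, w i s ai) * γ * D := by
    refine (pi_norm_le_iff_of_nonempty _).2 fun s => ?_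
    rw [Real.norm_eq_abs, mul_assoc]
    exact (abs_value_sub_le hγD hQ_sub s).trans <| mul_le_mul_of_nonneg_right
      (le_ciSup (Set.finite_range fun s => ∑ i, ⨆ ai, w i s ai).bddAbove s) hγD
  have hD0 : D = 0 := by
    have := (lt_div_iff₀ hγ.1).mp hcond
    nlinarith [norm_nonneg (value Q - value Q')]
  have := hQ_sub i s ai
  rw [hD0, mul_zero, mul_zero] at this
  exact sub_eq_zero.mp (abs_nonpos_iff.mp this)

/-- under the condition `max_s ∑_i max_{a_i} w_i(s,a_i) < 1/γ`, there is at
most one family `Q = (Q_i)` satisfying the Shapley–Bellman optimality equation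
`Q_i(s,a_i) = w_i(s,a_i)·∑_{s'} P(s'|s,a)·(R(s,a) + γ·∑_j max_{a_j'} Q_j(s',a_j')) − b_i(s)`
for every agent `i`, state `s` and joint action `a`. -/
theorem stmt_15
    {S : Type*} [Fintype S] [Nonempty S]
    {ι : Type*} [Fintype ι] [DecidableEq ι]
    {A : ι → Type*} [∀ i, Fintype (A i)] [∀ i, Nonempty (A i)]
    (P : S → (∀ i, A i) → S → ℝ)
    (hP0 : ∀ s a s', 0 ≤ P s a s')
    (hP1 : ∀ s a, ∑ s' : S, P s a s' = 1)
    (R : S → (∀ i, A i) → ℝ)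
    (w : ∀ i, S → A i → ℝ) (hw : ∀ i s ai, 0 < w i s ai)
    (b : ι → S → ℝ)
    (γ : ℝ) (hγ : 0 < γ ∧ γ < 1)
    (hcond : (⨆ s : S, ∑ i : ι, ⨆ ai : A i, w i s ai) < 1 / γ)
    (Q Q' : ∀ i, S → A i → ℝ)
    (hQ : ∀ (i : ι) (s : S) (a : ∀ j, A j),
      Q i s (a i) =
        w i s (a i) *
          ∑ s' : S, P s a s' *
            (R s a + γ * ∑ j : ι, ⨆ aj : A j, Q j s' aj) - b i s)
    (hQ' : ∀ (i : ι) (s : S) (a : ∀ j, A j),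
      Q' i s (a i) =
        w i s (a i) *
          ∑ s' : S, P s a s' *
            (R s a + γ * ∑ j : ι, ⨆ aj : A j, Q' j s' aj) - b i s) :
    ∀ (i : ι) (s : S) (ai : A i), Q i s ai = Q' i s ai :=
  stmt_15_general P hP0 hP1 R w hw b γ hγ hcond Q Q' hQ hQ'
end
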